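/- Let T be a tree with a quasi-isolated vertex u (with respect to some minimum total dominating set D), let P_4 be a path with support vertices v and w, and let T' = T +_{uv} P_4. Then γ_t(T') = γ_t(T) + 1. -/

import Mathlib

/-!
In a minimum total dominating set `D` of `T`, the vertex `z` with `pn(z, D) = {u}` is needed
only to dominate `u`. After attaching the `P_4`, its support vertices `1, 2` dominate the path
and also `u`, so `(D \ {z}) ∪ {1, 2}` totally dominates `T'`. Conversely, every total
dominating set of `T'` contains both support vertices (the only neighbours of the leaves `0, 3`),
and its trace on `T` together with one neighbour of `u` totally dominates `T`.
-/

open SimpleGraph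

/-- `D` is a total dominating set of `G`: every vertex has a neighbor in `D`. -/
def IsTotalDomSet {V : Type*} (G : SimpleGraph V) (D : Finset V) : Prop :=
  ∀ v : V, ∃ u ∈ D, G.Adj v u

/-- `X` is a vertex cover of `G`: every edge has an endpoint in `X`. -/
def IsVertexCover {V : Type*} (G : SimpleGraph V) (X : Finset V) : Prop :=
  ∀ ⦃a b : V⦄, G.Adj a b → a ∈ X ∨ b ∈ X

/-- The total domination number `γ_t(G)`. -/
noncomputable def gammaT {V : Type*} (G : SimpleGraph V) : ℕ :=
  sInf {n | ∃ D : Finset V, IsTotalDomSet G D ∧ D.card = n}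

/-- The vertex cover number `τ(G)`. -/
noncomputable def tau {V : Type*} (G : SimpleGraph V) : ℕ :=
  sInf {n | ∃ X : Finset V, _root_.IsVertexCover G X ∧ X.card = n}

/-- A `(γ_t-τ)`-set: simultaneously a minimum total dominating set and a
minimum vertex cover. -/
def IsGttSet {V : Type*} (G : SimpleGraph V) (D : Finset V) : Prop :=
  IsTotalDomSet G D ∧ _root_.IsVertexCover G D ∧ D.card = gammaT G ∧ D.card = tau G

/-- The sum `G +_{uv} H`: the disjoint union of `G` and `H` with the extra edge `uv`. -/
def graphSum {α β : Type*} (G : SimpleGraph α) (H : SimpleGraph β) (u : α) (v : β) :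
    SimpleGraph (α ⊕ β) :=
  SimpleGraph.fromRel (fun x y =>
    (∃ a b, x = Sum.inl a ∧ y = Sum.inl b ∧ G.Adj a b) ∨
    (∃ a b, x = Sum.inr a ∧ y = Sum.inr b ∧ H.Adj a b) ∨
    (x = Sum.inl u ∧ y = Sum.inr v))

/-- The private neighborhood `pn(u,S) = {w : N(w) ∩ S = {u}}`. -/
def pn {V : Type*} (G : SimpleGraph V) (S : Finset V) (u : V) : Set V :=
  {w | G.neighborSet w ∩ ↑S = {u}}

/-- `v` is quasi-isolated: for some minimum total dominating set `S` there is
`u ∈ S` with `pn(u,S) = {v}`. -/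
def QuasiIsolated {V : Type*} (G : SimpleGraph V) (v : V) : Prop :=
  ∃ S : Finset V, IsTotalDomSet G S ∧ S.card = gammaT G ∧ ∃ u ∈ S, pn G S u = {v}

/-- An end vertex: a vertex of degree 1. -/
def IsEndVertex {V : Type*} (G : SimpleGraph V) (v : V) : Prop :=
  (G.neighborSet v).ncard = 1

namespace graphSum

variable {α β : Type*} {G : SimpleGraph α} {H : SimpleGraph β} {u : α} {v : β}

@[simp] lemma adj_inl_inl {a b : α} : (graphSum G H u v).Adj (.inl a) (.inl b) ↔ G.Adj a b := by
  simpa [graphSum, G.adj_comm b a] using Adj.ne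

@[simp] lemma adj_inr_inr {a b : β} : (graphSum G H u v).Adj (.inr a) (.inr b) ↔ H.Adj a b := by
  simpa [graphSum, H.adj_comm b a] using Adj.ne

@[simp] lemma adj_inl_inr {a : α} {b : β} :
    (graphSum G H u v).Adj (.inl a) (.inr b) ↔ a = u ∧ b = v := by
  simp [graphSum]

@[simp] lemma adj_inr_inl {a : α} {b : β} :
    (graphSum G H u v).Adj (.inr b) (.inl a) ↔ a = u ∧ b = v := by
  rw [adj_comm, adj_inl_inr]

end graphSum

lemma gammaT_le_card {V : Type*} {G : SimpleGraph V} {D : Finset V} (hD : IsTotalDomSet G D) :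
    gammaT G ≤ D.card :=
  Nat.sInf_le ⟨D, hD, rfl⟩

lemma le_gammaT {V : Type*} {G : SimpleGraph V} {n : ℕ} (hG : ∃ D, IsTotalDomSet G D)
    (h : ∀ D, IsTotalDomSet G D → n ≤ D.card) : n ≤ gammaT G := by
  obtain ⟨D, hD⟩ := hG
  exact le_csInf ⟨D.card, D, hD, rfl⟩ (by rintro _ ⟨E, hE, rfl⟩; exact h E hE)

section PrivateNeighbors

variable {V : Type*} {G : SimpleGraph V} {S : Finset V} {z w : V}

lemma adj_of_mem_pn (hw : w ∈ pn G S z) : G.Adj w z :=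
  (hw.symm ▸ Set.mem_singleton z : z ∈ G.neighborSet w ∩ S).1

lemma IsTotalDomSet.exists_adj_mem_erase_of_notMem_pn [DecidableEq V] (hS : IsTotalDomSet G S)
    (hw : w ∉ pn G S z) : ∃ d ∈ S.erase z, G.Adj w d := by
  by_contra! h
  refine hw (Set.eq_singleton_iff_unique_mem.mpr ⟨?_, fun d hd => ?_⟩)
  · obtain ⟨d, hdS, hwd⟩ := hS w
    obtain rfl : d = z := by_contra fun hne => h d (Finset.mem_erase.mpr ⟨hne, hdS⟩) hwd
    exact ⟨hwd, hdS⟩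
  · by_contra hne
    exact h d (Finset.mem_erase.mpr ⟨hne, hd.2⟩) hd.1

end PrivateNeighbors

section TotalDominationOfSums

variable {α β : Type*} {G : SimpleGraph α} {H : SimpleGraph β} {u : α} {v : β}

lemma IsTotalDomSet.erase_disjSum [DecidableEq α] {D : Finset α} {S : Finset β} {z : α}
    (hD : IsTotalDomSet G D) (hpn : pn G D z ⊆ {u}) (hS : IsTotalDomSet H S) (hv : v ∈ S) :
    IsTotalDomSet (graphSum G H u v) ((D.erase z).disjSum S) := by
  rintro (w | x)
  · by_cases hw : w = u
    · exact ⟨.inr v, by simpa using hv, by simp [hw]⟩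
    · obtain ⟨d, hd, hwd⟩ := hD.exists_adj_mem_erase_of_notMem_pn fun h => hw (hpn h)
      exact ⟨.inl d, by simpa using hd, by simpa using hwd⟩
  · obtain ⟨y, hy, hxy⟩ := hS x
    exact ⟨.inr y, by simpa using hy, by simpa using hxy⟩

lemma gammaT_graphSum_add_one_le [DecidableEq α] {D : Finset α} {S : Finset β} {z : α}
    (hD : IsTotalDomSet G D) (hz : z ∈ D) (hpn : pn G D z ⊆ {u}) (hS : IsTotalDomSet H S)
    (hv : v ∈ S) : gammaT (graphSum G H u v) + 1 ≤ D.card + S.card := by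
  have h := gammaT_le_card (hD.erase_disjSum hpn hS hv)
  rw [Finset.card_disjSum, Finset.card_erase_of_mem hz] at h
  have := Finset.card_pos.mpr ⟨z, hz⟩
  omega

lemma IsTotalDomSet.exists_adj_mem_toRight {D : Finset (α ⊕ β)}
    (hD : IsTotalDomSet (graphSum G H u v) D) {x : β} (hx : x ≠ v) :
    ∃ y ∈ D.toRight, H.Adj x y := by
  obtain ⟨y | y, hy, hxy⟩ := hD (.inr x)
  · exact absurd (graphSum.adj_inr_inl.mp hxy).2 hx
  · exact ⟨y, by simpa using hy, by simpa using hxy⟩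

lemma IsTotalDomSet.insert_toLeft [DecidableEq α] {D : Finset (α ⊕ β)}
    (hD : IsTotalDomSet (graphSum G H u v) D) {z : α} (hz : G.Adj u z) :
    IsTotalDomSet G (insert z D.toLeft) := by
  intro w
  obtain ⟨y | y, hy, hwy⟩ := hD (.inl w)
  · exact ⟨y, by simp [hy], by simpa using hwy⟩
  · exact ⟨z, by simp, (graphSum.adj_inl_inr.mp hwy).1 ▸ hz⟩

end TotalDominationOfSums

section PathGraphFour

variable {α : Type*} {G : SimpleGraph α} {u : α}

lemma isTotalDomSet_pathGraph_four : IsTotalDomSet (pathGraph 4) {1, 2} := by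
  intro x
  fin_cases x <;> simp [pathGraph_adj]

/-- The leaves `0` and `3` of the attached `P_4` can only be dominated by its support vertices. -/
lemma IsTotalDomSet.two_le_card_toRight {D : Finset (α ⊕ Fin 4)}
    (hD : IsTotalDomSet (graphSum G (pathGraph 4) u 1) D) : 2 ≤ D.toRight.card := by
  obtain ⟨y₁, hy₁, h₁⟩ := hD.exists_adj_mem_toRight (x := 0) (by decide)
  obtain ⟨y₂, hy₂, h₂⟩ := hD.exists_adj_mem_toRight (x := 3) (by decide)
  obtain rfl : y₁ = 1 := Fin.ext (by rw [pathGraph_adj] at h₁; omega)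
  obtain rfl : y₂ = 2 := Fin.ext (by rw [pathGraph_adj] at h₂; omega)
  calc 2 = ({1, 2} : Finset (Fin 4)).card := rfl
    _ ≤ D.toRight.card := Finset.card_le_card (by simp [Finset.insert_subset_iff, hy₁, hy₂])

lemma gammaT_add_one_le_card [DecidableEq α] {D : Finset (α ⊕ Fin 4)}
    (hD : IsTotalDomSet (graphSum G (pathGraph 4) u 1) D) {z : α} (hz : G.Adj u z) :
    gammaT G + 1 ≤ D.card := by
  have hG := gammaT_le_card (hD.insert_toLeft hz)
  have := Finset.card_insert_le z D.toLeft
  have := Finset.card_toLeft_add_card_toRight (u := D)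
  have := hD.two_le_card_toRight
  omega

end PathGraphFour

theorem stmt18_general {V : Type*} (T : SimpleGraph V)
    (D : Finset V) (hD : IsTotalDomSet T D) (hmin : D.card = gammaT T)
    (u : V) (hqi : ∃ z ∈ D, pn T D z = {u}) :
    gammaT (graphSum T (SimpleGraph.pathGraph 4) u 1) = gammaT T + 1 := by
  classical
  obtain ⟨z, hzD, hpn⟩ := hqi
  have hP4 := isTotalDomSet_pathGraph_four
  have huz : T.Adj u z := adj_of_mem_pn (hpn.symm ▸ Set.mem_singleton u)
  apply le_antisymm
  · have := gammaT_graphSum_add_one_le (v := 1) hD hzD hpn.le hP4 (by simp)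
    simp only [Finset.card_pair (show (1 : Fin 4) ≠ 2 by decide)] at this
    omega
  · exact le_gammaT ⟨_, hD.erase_disjSum (v := 1) hpn.le hP4 (by simp)⟩
      fun _ hD' => gammaT_add_one_le_card hD' huz

/-- If `u` is `D`-quasi-isolated for some minimum total dominating set `D` of a tree
`T`, and a `P_4` is attached by an edge from its support vertex `v` to `u`, then
`γ_t(T') = γ_t(T) + 1`. -/
theorem stmt18 {V : Type*} (T : SimpleGraph V) (hT : T.IsTree)
    (D : Finset V) (hD : IsTotalDomSet T D) (hmin : D.card = gammaT T)
    (u : V) (hqi : ∃ z ∈ D, pn T D z = {u}) :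
    gammaT (graphSum T (SimpleGraph.pathGraph 4) u 1) = gammaT T + 1 :=
  stmt18_general T D hD hmin u hqi
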